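/- Let f₁, f₂ : ℝ → ℝ have Bernstein expansions of common degree k with coefficients b_α^{(f₁)} and b_α^{(f₂)}, where all b_α^{(f₂)} > 0. Then for all x ∈ [0,1] with f₂(x) > 0, one has min_{α ≤ k} (b_α^{(f₁)} / b_α^{(f₂)}) ≤ f₁(x)/f₂(x) ≤ max_{α ≤ k} (b_α^{(f₁)} / b_α^{(f₂)}). -/

import Mathlib

/-- Univariate Bernstein basis polynomial of degree `k`. -/
noncomputable def bern (k α : ℕ) (x : ℝ) : ℝ :=
  (k.choose α : ℝ) * x ^ α * (1 - x) ^ (k - α)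

lemma bern_nonneg (k α : ℕ) {x : ℝ} (hx : x ∈ Set.Icc (0 : ℝ) 1) : 0 ≤ bern k α x := by
  have h1x : 0 ≤ 1 - x := sub_nonneg.2 hx.2
  have hx0 := hx.1
  unfold bern
  positivity

section Mediant

variable {ι : Type*} (s : Finset ι) (hs : s.Nonempty) {a b w : ι → ℝ}

lemma inf'_div_mul_sum_le_sum (hb : ∀ i ∈ s, 0 < b i) (hw : ∀ i ∈ s, 0 ≤ w i) :
    s.inf' hs (fun i => a i / b i) * ∑ i ∈ s, b i * w i ≤ ∑ i ∈ s, a i * w i := by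
  rw [Finset.mul_sum]
  refine Finset.sum_le_sum fun i hi => ?_
  have hab : s.inf' hs (fun i => a i / b i) * b i ≤ a i :=
    (le_div_iff₀ (hb i hi)).1 (Finset.inf'_le _ hi)
  rw [← mul_assoc]
  exact mul_le_mul_of_nonneg_right hab (hw i hi)

lemma sum_le_sup'_div_mul_sum (hb : ∀ i ∈ s, 0 < b i) (hw : ∀ i ∈ s, 0 ≤ w i) :
    ∑ i ∈ s, a i * w i ≤ s.sup' hs (fun i => a i / b i) * ∑ i ∈ s, b i * w i := by
  rw [Finset.mul_sum]
  refine Finset.sum_le_sum fun i hi => ?_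
  have hab : a i ≤ s.sup' hs (fun i => a i / b i) * b i :=
    (div_le_iff₀ (hb i hi)).1 (Finset.le_sup' (fun i => a i / b i) hi)
  rw [← mul_assoc]
  exact mul_le_mul_of_nonneg_right hab (hw i hi)

end Mediant

theorem stmt_4 (k : ℕ) (f₁ f₂ : ℝ → ℝ) (b₁ b₂ : Fin (k + 1) → ℝ)
    (hf₁ : ∀ x, f₁ x = ∑ α : Fin (k + 1), b₁ α * bern k (α : ℕ) x)
    (hf₂ : ∀ x, f₂ x = ∑ α : Fin (k + 1), b₂ α * bern k (α : ℕ) x)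
    (hb₂ : ∀ α, 0 < b₂ α)
    (x : ℝ) (hx : x ∈ Set.Icc (0 : ℝ) 1) (hf₂x : 0 < f₂ x) :
    Finset.univ.inf' Finset.univ_nonempty (fun α => b₁ α / b₂ α) ≤ f₁ x / f₂ x ∧
    f₁ x / f₂ x ≤ Finset.univ.sup' Finset.univ_nonempty (fun α => b₁ α / b₂ α) := by
  have hb : ∀ α ∈ Finset.univ, 0 < b₂ α := fun α _ => hb₂ α
  have hw : ∀ α ∈ (Finset.univ : Finset (Fin (k + 1))), 0 ≤ bern k α x :=
    fun α _ => bern_nonneg k α hx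
  rw [le_div_iff₀ hf₂x, div_le_iff₀ hf₂x, hf₁ x, hf₂ x]
  exact ⟨inf'_div_mul_sum_le_sum _ _ hb hw, sum_le_sup'_div_mul_sum _ _ hb hw⟩
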